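/- arXiv:2107.08428 — 2 statements merged into one kernel-verified Lean document; each statement's English description precedes it below -/
import Mathlib

section
/- Let G and H be locally finite games. If both G and H have infinite rank, then 𝒢(G + H) = ∞(∅); in particular G + H is a D-position (a draw). -/
open scoped Classical

universe u

/-- `PosP Γ n` is the set `Pₙ` of positions from which the second player can win
within `n` rounds: `P₀` is the set of terminal positions, and
`Pₙ₊₁ = {x : every option of x has an option in Pₙ}`. -/
def PosP {V : Type*} (Γ : V → Finset V) : ℕ → Set V
  | 0 => {x | Γ x = ∅}
  | n + 1 => {x | ∀ y ∈ Γ x, ∃ z ∈ Γ y, z ∈ PosP Γ n}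

/-- `PosN Γ n` is the set `Nₙ`: for `n ≥ 1`, `Nₙ = {x : some option of x lies in Pₙ₋₁}`. -/
def PosN {V : Type*} (Γ : V → Finset V) : ℕ → Set V
  | 0 => ∅
  | n + 1 => {x | ∃ y ∈ Γ x, y ∈ PosP Γ n}

/-- The P-positions `𝒫 = ⋃ₙ Pₙ` (second player wins). -/
def PPos {V : Type*} (Γ : V → Finset V) : Set V := ⋃ n, PosP Γ n

/-- The N-positions `𝒩 = ⋃ₙ Nₙ` (first player wins). -/
def NPos {V : Type*} (Γ : V → Finset V) : Set V := ⋃ n, PosN Γ n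

/-- The D-positions `𝒟 = V ∖ (𝒫 ∪ 𝒩)` (draws). -/
def DPos {V : Type*} (Γ : V → Finset V) : Set V := (PPos Γ ∪ NPos Γ)ᶜ

/-- The mex (least natural number not attained) of the values `g y`, `y ∈ s`. -/
noncomputable def mexF {V : Type*} (s : Finset V) (g : V → ℕ∞) : ℕ :=
  sInf {n : ℕ | ∀ y ∈ s, g y ≠ (n : ℕ∞)}

/-- The approximants `𝒢ₙ` of the extended Sprague-Grundy function. -/
noncomputable def Gfun {V : Type*} (Γ : V → Finset V) : ℕ → V → ℕ∞
  | 0 => fun x => if Γ x = ∅ then 0 else ⊤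
  | n + 1 => fun x =>
      let m := mexF (Γ x) (Gfun Γ n)
      if ∀ y ∈ Γ x, Gfun Γ n y ≤ (m : ℕ∞) ∨ ∃ z ∈ Γ y, Gfun Γ n z = (m : ℕ∞)
      then (m : ℕ∞) else ⊤

/-- `x` has finite rank with (finite) Sprague-Grundy value `m`:
`𝒢ₙ(x) = m` for all sufficiently large `n`. -/
def HasGVal {V : Type*} (Γ : V → Finset V) (x : V) (m : ℕ) : Prop :=
  ∃ n₀ : ℕ, ∀ n ≥ n₀, Gfun Γ n x = (m : ℕ∞)

/-- `x` has infinite rank: `𝒢ₙ(x) = ∞` for all `n`. -/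
def InfiniteRank {V : Type*} (Γ : V → Finset V) (x : V) : Prop :=
  ∀ n : ℕ, Gfun Γ n x = ⊤

/-- The rank of `x`: the least `n` with `𝒢ₙ(x) < ∞`, or `∞` if there is none. -/
noncomputable def rank {V : Type*} (Γ : V → Finset V) (x : V) : ℕ∞ :=
  sInf ((↑) '' {n : ℕ | Gfun Γ n x ≠ ⊤})

/-- For `x` of infinite rank, the set `𝒜` with `𝒢(x) = ∞(𝒜)`:
the set of finite Sprague-Grundy values of finite-rank options of `x`. -/
def ValSet {V : Type*} (Γ : V → Finset V) (x : V) : Set ℕ :=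
  {a | ∃ y ∈ Γ x, HasGVal Γ y a}

/-- The graph of the disjunctive sum: move in exactly one coordinate. -/
noncomputable def sumGraph {V W : Type*} (Γ : V → Finset V) (Δ : W → Finset W) :
    V × W → Finset (V × W) := fun p =>
  (Γ p.1).image (fun u => (u, p.2)) ∪ (Δ p.2).image (fun w => (p.1, w))

/-- Two (positions of possibly different) games lie in the same outcome class. -/
def SameOutcome {V W : Type*} (Γ : V → Finset V) (x : V) (Δ : W → Finset W) (y : W) : Prop :=
  (x ∈ PPos Γ ↔ y ∈ PPos Δ) ∧ (x ∈ NPos Γ ↔ y ∈ NPos Δ) ∧ (x ∈ DPos Γ ↔ y ∈ DPos Δ)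

/-- Equivalence of games: `G + X` and `H + X` have the same outcome for every
locally finite game `X`. -/
def GameEquiv {V W : Type*} (Γ : V → Finset V) (x : V) (Δ : W → Finset W) (y : W) : Prop :=
  ∀ (X : Type u) (Ξ : X → Finset X) (z : X),
    SameOutcome (sumGraph Γ Ξ) (x, z) (sumGraph Δ Ξ) (y, z)

/-- The nim heap `*m`: positions `0, …, m`, where from `k` one can move to any `j < k`. -/
def nimGraph (m : ℕ) : Fin (m + 1) → Finset (Fin (m + 1)) :=
  fun k => Finset.univ.filter (fun j => j < k)

/-- The reduced graph `R(V)`: the induced graph on the complement of the P-positions. -/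
noncomputable def reducedGraph {V : Type*} (Γ : V → Finset V) :
    {x : V // x ∉ PPos Γ} → Finset {x : V // x ∉ PPos Γ} := fun x =>
  (Γ x.1).subtype (fun y => y ∉ PPos Γ)

/-- The vertex set of `R^{(k)}(V)`: positions which do not have finite rank with
Sprague-Grundy value `< k`. -/
def RkSet {V : Type*} (Γ : V → Finset V) (k : ℕ) : Set V :=
  {x | ¬ ∃ m < k, HasGVal Γ x m}

/-- The induced game graph `R^{(k)}(V)` on `RkSet Γ k`. -/
noncomputable def RkGraph {V : Type*} (Γ : V → Finset V) (k : ℕ) :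
    RkSet Γ k → Finset (RkSet Γ k) := fun x =>
  (Γ x.1).subtype (fun y => y ∈ RkSet Γ k)

/-- `V` is `k`-stable: every infinite-rank position `x`, with `𝒢(x) = ∞(𝒜)`,
has `{0, 1, …, k} ⊆ 𝒜`. -/
def kStable {V : Type*} (Γ : V → Finset V) (k : ℕ) : Prop :=
  ∀ x, InfiniteRank Γ x → ∀ j ≤ k, j ∈ ValSet Γ x

/-- `l` is a directed walk from `o` to `x` in the graph `Γ`. -/
def IsWalk {V : Type*} (Γ : V → Finset V) (o x : V) (l : List V) : Prop :=
  l.head? = some o ∧ l.getLast? = some x ∧ l.Chain' (fun a b => b ∈ Γ a)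

/-- `Γ` is a tree with root `o`: `o` has no incoming arcs, and every vertex is
reached from `o` by a unique directed walk. -/
def IsTree {V : Type*} (Γ : V → Finset V) (o : V) : Prop :=
  (∀ x, o ∉ Γ x) ∧ ∀ x, ∃! l : List V, IsWalk Γ o x l

/-- `f` is a mex labelling: `f x` is the least natural number not attained by `f`
on the options of `x`, for every `x`. -/
def MexLabelling {V : Type*} (Γ : V → Finset V) (f : V → ℕ) : Prop :=
  ∀ x, f x = sInf {n : ℕ | ∀ y ∈ Γ x, f y ≠ n}

/-!
At every finite stage `n` the approximant `𝒢ₙ` obeys the Sprague–Grundy sum rule: if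
`𝒢ₙ(u, w)` is finite, then so are `𝒢ₙ(u)` and `𝒢ₙ(w)`, and `𝒢ₙ(u, w) = 𝒢ₙ(u) ⊕ 𝒢ₙ(w)`.
This goes by induction on `n`, along the lines of the classical proof of the Sprague–Grundy
theorem. Consequently, if `x` and `y` have infinite rank, then `(x, y)` and each of its options
have infinite rank, so `𝒜 = ∅`; and a position of infinite rank with `0 ∉ 𝒜` is a draw,
because every position of `Pₙ` has value `0`.
-/

section Mex

variable {V : Type*}

theorem mexF_nonempty (s : Finset V) (g : V → ℕ∞) :
    {n : ℕ | ∀ y ∈ s, g y ≠ n}.Nonempty := by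
  refine ⟨(s.sup fun y => (g y).toNat) + 1, fun y hy hgy => ?_⟩
  have := Finset.le_sup (f := fun y => (g y).toNat) hy
  simp only [hgy, ENat.toNat_natCast] at this
  omega

theorem mexF_not_attained (s : Finset V) (g : V → ℕ∞) : ∀ y ∈ s, g y ≠ mexF s g :=
  Nat.sInf_mem (mexF_nonempty s g)

theorem mexF_attained_of_lt {s : Finset V} {g : V → ℕ∞} {j : ℕ} (hj : j < mexF s g) :
    ∃ y ∈ s, g y = j := by
  simpa using Nat.notMem_of_lt_sInf hj

theorem mexF_le_of_forall_ne {s : Finset V} {g : V → ℕ∞} {k : ℕ} (h : ∀ y ∈ s, g y ≠ k) :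
    mexF s g ≤ k :=
  Nat.sInf_le h

theorem mexF_empty (g : V → ℕ∞) : mexF ∅ g = 0 :=
  Nat.sInf_eq_zero.2 (Or.inl (by simp))

theorem mexF_image {V' : Type*} [DecidableEq V'] (s : Finset V) (f : V → V') (g : V' → ℕ∞) :
    mexF (s.image f) g = mexF s (g ∘ f) := by
  simp [mexF]

end Mex

section Gfun

variable {V : Type*} {Γ : V → Finset V} {n m : ℕ} {x : V}

theorem Gfun_zero_ne_top_iff : Gfun Γ 0 x ≠ ⊤ ↔ Γ x = ∅ := by
  simp only [Gfun]
  split_ifs with h <;> simp [h]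

theorem Gfun_succ_eq_natCast_iff : Gfun Γ (n + 1) x = m ↔ mexF (Γ x) (Gfun Γ n) = m ∧
    ∀ y ∈ Γ x, Gfun Γ n y ≤ m ∨ ∃ z ∈ Γ y, Gfun Γ n z = m := by
  simp only [Gfun]
  split_ifs with h
  · constructor
    · intro hm
      obtain rfl := Nat.cast_injective hm
      exact ⟨rfl, h⟩
    · rintro ⟨rfl, -⟩
      rfl
  · simp only [ENat.top_ne_natCast, false_iff]
    rintro ⟨rfl, hc⟩
    exact h hc

theorem Gfun_of_eq_empty (h : Γ x = ∅) : ∀ n, Gfun Γ n x = 0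
  | 0 => if_pos h
  | n + 1 => Gfun_succ_eq_natCast_iff.2 ⟨by rw [h, mexF_empty], by simp [h]⟩

theorem mexF_Gfun_succ (hstab : ∀ y, Gfun Γ n y ≠ ⊤ → Gfun Γ (n + 1) y = Gfun Γ n y)
    (hx : Gfun Γ (n + 1) x = m) : mexF (Γ x) (Gfun Γ (n + 1)) = m := by
  obtain ⟨hmex, hcond⟩ := Gfun_succ_eq_natCast_iff.1 hx
  refine le_antisymm (mexF_le_of_forall_ne fun y hy hgy => ?_) (not_lt.1 fun hlt => ?_)
  · by_cases htop : Gfun Γ n y = ⊤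
    · rcases hcond y hy with hle | ⟨z, hz, hgz⟩
      · simp [htop] at hle
      · exact mexF_not_attained _ _ z hz (by rw [(Gfun_succ_eq_natCast_iff.1 hgy).1, hgz])
    · exact mexF_not_attained _ _ y hy (by rw [hmex, ← hstab y htop, hgy])
  · obtain ⟨y, hy, hgy⟩ := mexF_attained_of_lt (hmex ▸ hlt)
    exact mexF_not_attained (Γ x) (Gfun Γ (n + 1)) y hy (by rw [hstab y (by simp [hgy]), hgy])

theorem Gfun_succ_eq_of_ne_top : ∀ n x, Gfun Γ n x ≠ ⊤ → Gfun Γ (n + 1) x = Gfun Γ n x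
  | 0, x, h => by
    rw [Gfun_of_eq_empty (Gfun_zero_ne_top_iff.1 h), Gfun_of_eq_empty (Gfun_zero_ne_top_iff.1 h)]
  | n + 1, x, h => by
    obtain ⟨m, hm⟩ := ENat.ne_top_iff_exists.1 h
    have hstab := Gfun_succ_eq_of_ne_top n
    obtain ⟨-, hcond⟩ := Gfun_succ_eq_natCast_iff.1 hm.symm
    rw [← hm]
    refine Gfun_succ_eq_natCast_iff.2 ⟨mexF_Gfun_succ hstab hm.symm, fun y hy => ?_⟩
    rcases hcond y hy with hle | ⟨z, hz, hgz⟩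
    · exact Or.inl (by rwa [hstab y (ne_top_of_le_ne_top (ENat.natCast_ne_top m) hle)])
    · exact Or.inr ⟨z, hz, by rw [hstab z (by simp [hgz]), hgz]⟩

theorem Gfun_eq_of_le {k : ℕ} (h : Gfun Γ n x ≠ ⊤) (hk : n ≤ k) : Gfun Γ k x = Gfun Γ n x := by
  induction k, hk using Nat.le_induction with
  | base => rfl
  | succ k _ ih => rw [Gfun_succ_eq_of_ne_top k x (ih ▸ h), ih]

theorem mexF_Gfun_eq (h : Gfun Γ n x = m) : mexF (Γ x) (Gfun Γ n) = m := by
  cases n with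
  | zero =>
    have hx := Gfun_zero_ne_top_iff.1 (h ▸ ENat.natCast_ne_top m)
    rw [Gfun_of_eq_empty hx] at h
    rw [hx, mexF_empty]
    exact_mod_cast h
  | succ n => exact mexF_Gfun_succ (Gfun_succ_eq_of_ne_top n) h

theorem Gfun_eq_mexF (h : Gfun Γ n x ≠ ⊤) : Gfun Γ n x = mexF (Γ x) (Gfun Γ n) := by
  obtain ⟨m, hm⟩ := ENat.ne_top_iff_exists.1 h
  rw [← hm, mexF_Gfun_eq hm.symm]

theorem Gfun_ne_of_mem {y : V} (hy : y ∈ Γ x) (hx : Gfun Γ n x ≠ ⊤) : Gfun Γ n y ≠ Gfun Γ n x :=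
  Gfun_eq_mexF hx ▸ mexF_not_attained _ _ y hy

theorem Gfun_attained_of_lt {j : ℕ} (h : Gfun Γ n x = m) (hj : j < m) :
    ∃ y ∈ Γ x, Gfun Γ n y = j :=
  mexF_attained_of_lt (mexF_Gfun_eq h ▸ hj)

theorem Gfun_of_mem_PosP : ∀ {n x}, x ∈ PosP Γ n → Gfun Γ n x = 0
  | 0, _, hx => Gfun_of_eq_empty hx 0
  | n + 1, x, hx => by
    have hmex : mexF (Γ x) (Gfun Γ n) = 0 := by
      refine Nat.le_zero.1 (mexF_le_of_forall_ne fun y hy hgy => ?_)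
      obtain ⟨z, hz, hzP⟩ := hx y hy
      exact Gfun_ne_of_mem (n := n) hz (by simp [hgy])
        (by rw [Gfun_of_mem_PosP hzP, hgy, Nat.cast_zero])
    refine Gfun_succ_eq_natCast_iff.2 ⟨hmex, fun y hy => Or.inr ?_⟩
    obtain ⟨z, hz, hzP⟩ := hx y hy
    exact ⟨z, hz, by rw [Gfun_of_mem_PosP hzP, Nat.cast_zero]⟩

theorem hasGVal_zero_of_mem_PosP (hx : x ∈ PosP Γ n) : HasGVal Γ x 0 :=
  ⟨n, fun _ hk => (Gfun_eq_of_le (by simp [Gfun_of_mem_PosP hx]) hk).trans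
    (Gfun_of_mem_PosP hx)⟩

theorem mem_DPos_of_infiniteRank (hx : InfiniteRank Γ x) (h0 : 0 ∉ ValSet Γ x) :
    x ∈ DPos Γ := by
  simp only [DPos, PPos, NPos, Set.mem_compl_iff, Set.mem_union, Set.mem_iUnion]
  rintro (⟨n, hP⟩ | ⟨_ | n, hN⟩)
  · simpa [hx n] using Gfun_of_mem_PosP hP
  · exact hN
  · obtain ⟨y, hy, hyP⟩ := hN
    exact h0 ⟨y, hy, hasGVal_zero_of_mem_PosP hyP⟩

theorem Gfun_comp_of_image {V' : Type*} [DecidableEq V'] {Γ' : V' → Finset V'} (f : V → V')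
    (hf : ∀ x, Γ' (f x) = (Γ x).image f) : ∀ n x, Gfun Γ' n (f x) = Gfun Γ n x
  | 0, x => by simp [Gfun, hf]
  | n + 1, x => by
    simp only [Gfun, hf, mexF_image, Function.comp_def, Gfun_comp_of_image f hf n,
      Finset.forall_mem_image, Finset.exists_mem_image]

end Gfun

section Sum

variable {V W : Type*} {Γ : V → Finset V} {Δ : W → Finset W} {n : ℕ} {u : V} {w : W}

theorem mem_sumGraph {p : V × W} : p ∈ sumGraph Γ Δ (u, w) ↔
    (∃ u' ∈ Γ u, p = (u', w)) ∨ ∃ w' ∈ Δ w, p = (u, w') := by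
  simp only [sumGraph, Finset.mem_union, Finset.mem_image]
  grind

theorem mk_mem_sumGraph_left {u' : V} (h : u' ∈ Γ u) : (u', w) ∈ sumGraph Γ Δ (u, w) :=
  mem_sumGraph.2 (Or.inl ⟨u', h, rfl⟩)

theorem mk_mem_sumGraph_right {w' : W} (h : w' ∈ Δ w) : (u, w') ∈ sumGraph Γ Δ (u, w) :=
  mem_sumGraph.2 (Or.inr ⟨w', h, rfl⟩)

theorem sumGraph_eq_empty_iff : sumGraph Γ Δ (u, w) = ∅ ↔ Γ u = ∅ ∧ Δ w = ∅ := by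
  simp [sumGraph]

theorem sumGraph_swap (p : V × W) : sumGraph Δ Γ p.swap = (sumGraph Γ Δ p).image Prod.swap := by
  ext ⟨w', u'⟩
  simp only [sumGraph, Finset.image_union, Finset.image_image, Finset.mem_union, Finset.mem_image]
  grind

theorem Gfun_sumGraph_swap (n : ℕ) (u : V) (w : W) :
    Gfun (sumGraph Δ Γ) n (w, u) = Gfun (sumGraph Γ Δ) n (u, w) :=
  Gfun_comp_of_image Prod.swap sumGraph_swap n (u, w)

variable (Γ Δ) in
/-- The Sprague–Grundy sum rule at stage `n`. A finite value is always the mex of the options'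
values (`Gfun_eq_mexF`), which is how the values of the components are written here. -/
def NimSumRule (n : ℕ) : Prop :=
  ∀ u w (c : ℕ), Gfun (sumGraph Γ Δ) n (u, w) = c →
    Gfun Γ n u = mexF (Γ u) (Gfun Γ n) ∧ Gfun Δ n w = mexF (Δ w) (Gfun Δ n) ∧
      mexF (Γ u) (Gfun Γ n) ^^^ mexF (Δ w) (Gfun Δ n) = c

theorem NimSumRule.swap (h : NimSumRule Γ Δ n) : NimSumRule Δ Γ n := by
  intro w u c hc
  obtain ⟨hu, hw, hxor⟩ := h u w c (by rwa [← Gfun_sumGraph_swap])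
  exact ⟨hw, hu, by rwa [Nat.xor_comm]⟩

theorem NimSumRule.ne_top_left (h : NimSumRule Γ Δ n) (hne : Gfun (sumGraph Γ Δ) n (u, w) ≠ ⊤) :
    Gfun Γ n u ≠ ⊤ := by
  obtain ⟨c, hc⟩ := ENat.ne_top_iff_exists.1 hne
  rw [(h u w c hc.symm).1]
  exact ENat.natCast_ne_top _

theorem NimSumRule.Gfun_left_ne {u' : V} (h : NimSumRule Γ Δ n) (hu' : u' ∈ Γ u) :
    Gfun (sumGraph Γ Δ) n (u', w) ≠ (mexF (Γ u) (Gfun Γ n) ^^^ mexF (Δ w) (Gfun Δ n) : ℕ) := by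
  intro hc
  obtain ⟨hgu', -, hxor⟩ := h u' w _ hc
  rw [Nat.xor_left_inj] at hxor
  exact mexF_not_attained (Γ u) (Gfun Γ n) u' hu' (by rw [hgu', hxor])

theorem NimSumRule.not_xor_lt_left {M : ℕ} (h : NimSumRule Γ Δ n)
    (hM : Gfun (sumGraph Γ Δ) (n + 1) (u, w) = M) :
    ¬ M ^^^ mexF (Δ w) (Gfun Δ n) < mexF (Γ u) (Gfun Γ n) := by
  intro hlt
  obtain ⟨hmex, hcond⟩ := Gfun_succ_eq_natCast_iff.1 hM
  obtain ⟨u', hu', hgu'⟩ := mexF_attained_of_lt hlt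
  have hmex' := mexF_Gfun_eq hgu'
  rcases hcond _ (mk_mem_sumGraph_left hu') with hle | ⟨q, hq, hqM⟩
  · obtain ⟨c, hc⟩ := ENat.ne_top_iff_exists.1 (ne_top_of_le_ne_top (ENat.natCast_ne_top M) hle)
    obtain ⟨-, -, hxor⟩ := h u' w c hc.symm
    rw [hmex', Nat.xor_xor_cancel_right] at hxor
    exact mexF_not_attained (sumGraph Γ Δ (u, w)) (Gfun (sumGraph Γ Δ) n) _
      (mk_mem_sumGraph_left hu') (by rw [← hc, hmex, hxor])
  · rcases mem_sumGraph.1 hq with ⟨u'', hu'', rfl⟩ | ⟨w', hw', rfl⟩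
    · obtain ⟨hgu'', -, hxor⟩ := h u'' w M hqM
      refine Gfun_ne_of_mem (n := n) hu'' (by simp [hgu']) ?_
      rw [hgu'', hgu', ← hxor, Nat.xor_xor_cancel_right]
    · obtain ⟨-, hgw', hxor⟩ := h u' w' M hqM
      rw [hmex'] at hxor
      have hb := Nat.xor_right_inj.1 (hxor.trans (Nat.xor_xor_cancel_right M _).symm)
      exact mexF_not_attained (Δ w) (Gfun Δ n) w' hw' (by rw [hgw', hb])

theorem NimSumRule.Gfun_succ_left (h : NimSumRule Γ Δ n)
    (hM : Gfun (sumGraph Γ Δ) (n + 1) (u, w) =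
      (mexF (Γ u) (Gfun Γ n) ^^^ mexF (Δ w) (Gfun Δ n) : ℕ)) :
    Gfun Γ (n + 1) u = mexF (Γ u) (Gfun Γ n) := by
  refine Gfun_succ_eq_natCast_iff.2 ⟨rfl, fun u' hu' => ?_⟩
  obtain ⟨-, hcond⟩ := Gfun_succ_eq_natCast_iff.1 hM
  cases hgu' : Gfun Γ n u' using ENat.recTopCoe with
  | top =>
    rcases hcond _ (mk_mem_sumGraph_left hu') with hle | ⟨q, hq, hqM⟩
    · exact absurd hgu' (h.ne_top_left (ne_top_of_le_ne_top (ENat.natCast_ne_top _) hle))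
    · rcases mem_sumGraph.1 hq with ⟨u'', hu'', rfl⟩ | ⟨w', -, rfl⟩
      · obtain ⟨hgu'', -, hxor⟩ := h u'' w _ hqM
        exact Or.inr ⟨u'', hu'', by rw [hgu'', Nat.xor_left_inj.1 hxor]⟩
      · exact absurd hgu' (h.ne_top_left (w := w') (by simp [hqM]))
  | coe e =>
    rcases le_or_gt e (mexF (Γ u) (Gfun Γ n)) with hle | hlt
    · exact Or.inl (by exact_mod_cast hle)
    · exact Or.inr (Gfun_attained_of_lt hgu' hlt)

theorem nimSumRule_zero : NimSumRule Γ Δ 0 := by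
  intro u w c hc
  have hempty := Gfun_zero_ne_top_iff.1 (hc ▸ ENat.natCast_ne_top c)
  obtain ⟨hu, hw⟩ := sumGraph_eq_empty_iff.1 hempty
  rw [Gfun_of_eq_empty hempty] at hc
  rw [Gfun_of_eq_empty hu, Gfun_of_eq_empty hw, hu, hw, mexF_empty, mexF_empty]
  exact ⟨Nat.cast_zero.symm, Nat.cast_zero.symm, by simpa [eq_comm] using hc⟩

theorem NimSumRule.succ (h : NimSumRule Γ Δ n) : NimSumRule Γ Δ (n + 1) := by
  intro u w M hM
  have hM' : Gfun (sumGraph Δ Γ) (n + 1) (w, u) = M := by rwa [Gfun_sumGraph_swap]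
  have hle : M ≤ mexF (Γ u) (Gfun Γ n) ^^^ mexF (Δ w) (Gfun Δ n) := by
    rw [← (Gfun_succ_eq_natCast_iff.1 hM).1]
    refine mexF_le_of_forall_ne fun p hp => ?_
    rcases mem_sumGraph.1 hp with ⟨u', hu', rfl⟩ | ⟨w', hw', rfl⟩
    · exact h.Gfun_left_ne hu'
    · rw [← Gfun_sumGraph_swap, Nat.xor_comm]
      exact h.swap.Gfun_left_ne hw'
  have hMeq : M = mexF (Γ u) (Gfun Γ n) ^^^ mexF (Δ w) (Gfun Δ n) := by
    refine hle.antisymm (not_lt.1 fun hlt => ?_)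
    rcases Nat.lt_xor_cases hlt with hlt | hlt
    · exact h.not_xor_lt_left hM hlt
    · exact h.swap.not_xor_lt_left hM' hlt
  subst hMeq
  have hu := h.Gfun_succ_left hM
  have hw := h.swap.Gfun_succ_left (by rwa [Nat.xor_comm])
  rw [mexF_Gfun_eq hu, mexF_Gfun_eq hw]
  exact ⟨hu, hw, rfl⟩

theorem nimSumRule : ∀ n, NimSumRule Γ Δ n
  | 0 => nimSumRule_zero
  | n + 1 => (nimSumRule n).succ

theorem Gfun_sumGraph_eq_top_of_left (h : Gfun Γ n u = ⊤) : Gfun (sumGraph Γ Δ) n (u, w) = ⊤ :=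
  not_not.1 fun hne => (nimSumRule n).ne_top_left hne h

theorem Gfun_sumGraph_eq_top_of_right (h : Gfun Δ n w = ⊤) :
    Gfun (sumGraph Γ Δ) n (u, w) = ⊤ := by
  rw [← Gfun_sumGraph_swap]
  exact Gfun_sumGraph_eq_top_of_left h

end Sum

/-- if both `G` and `H` have infinite rank then
`𝒢(G + H) = ∞(∅)`; in particular `G + H` is a D-position. -/
theorem stmt4 {V W : Type*} (Γ : V → Finset V) (Δ : W → Finset W) (x : V) (y : W)
    (hx : InfiniteRank Γ x) (hy : InfiniteRank Δ y) :
    InfiniteRank (sumGraph Γ Δ) (x, y) ∧ ValSet (sumGraph Γ Δ) (x, y) = ∅ ∧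
      (x, y) ∈ DPos (sumGraph Γ Δ) := by
  have hrank : InfiniteRank (sumGraph Γ Δ) (x, y) := fun n => Gfun_sumGraph_eq_top_of_left (hx n)
  have hoptions : ∀ p ∈ sumGraph Γ Δ (x, y), InfiniteRank (sumGraph Γ Δ) p := by
    intro p hp n
    rcases mem_sumGraph.1 hp with ⟨x', -, rfl⟩ | ⟨y', -, rfl⟩
    · exact Gfun_sumGraph_eq_top_of_right (hy n)
    · exact Gfun_sumGraph_eq_top_of_left (hx n)
  have hval : ValSet (sumGraph Γ Δ) (x, y) = ∅ := by
    refine Set.eq_empty_of_forall_notMem fun a ⟨p, hp, n, hn⟩ => ?_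
    simpa [hoptions p hp n] using hn n le_rfl
  exact ⟨hrank, hval, mem_DPos_of_infiniteRank hrank (hval ▸ Set.notMem_empty 0)⟩
end

section
/- Let V be a locally finite game graph, x ∈ V, n ∈ ℕ and m ∈ ℕ. The following are equivalent: (a) rank(x) ≤ n and 𝒢(x) = m; (b) both of the following hold: (i) for each i with 0 ≤ i ≤ m−1 there exists yᵢ ∈ Γ(x) with rank(yᵢ) < n and 𝒢(yᵢ) = i; and (ii) for every y ∈ Γ(x), either rank(y) < n and 𝒢(y) < m, or there exists z ∈ Γ(y) with rank(z) < n and 𝒢(z) = m. -/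
open scoped Classical

universe u

/-! Finite values of the approximants are stable: once `𝒢ₙ(x) = m < ∞`, also `𝒢ₖ(x) = m` for
all `k ≥ n`. Hence `rank(x) ≤ n ∧ 𝒢(x) = m` says exactly `𝒢ₙ(x) = m`, and `rank(y) < n ∧ 𝒢(y) = i`
says `𝒢ₙ₋₁(y) = i`, so the theorem is the recursion defining `𝒢ₙ` read through the mex. The one
point needing an argument is that a position of value `m` at stage `n` has no option of value `m`
at stage `n`. -/

section Mex

variable {V : Type*} (s : Finset V) (g : V → ℕ∞)

lemma mexF_ne : ∀ y ∈ s, g y ≠ (mexF s g : ℕ∞) := by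
  refine Nat.sInf_mem (s := {n : ℕ | ∀ y ∈ s, g y ≠ (n : ℕ∞)})
    ⟨(s.sup fun y => (g y).toNat) + 1, fun y hy hgy => ?_⟩
  have hle : (g y).toNat ≤ s.sup fun y => (g y).toNat := Finset.le_sup (f := fun y => (g y).toNat) hy
  rw [hgy, ENat.toNat_natCast] at hle
  omega

lemma exists_eq_of_lt_mexF {i : ℕ} (hi : i < mexF s g) : ∃ y ∈ s, g y = (i : ℕ∞) := by
  simpa using Nat.notMem_of_lt_sInf hi

lemma mexF_eq_iff {m : ℕ} :
    mexF s g = m ↔ (∀ y ∈ s, g y ≠ (m : ℕ∞)) ∧ ∀ i < m, ∃ y ∈ s, g y = (i : ℕ∞) := by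
  refine ⟨fun h => h ▸ ⟨mexF_ne s g, fun _ => exists_eq_of_lt_mexF s g⟩, fun ⟨hne, hex⟩ => ?_⟩
  refine le_antisymm (Nat.sInf_le hne) (le_csInf ⟨m, hne⟩ fun k hk => ?_)
  by_contra! hkm
  obtain ⟨y, hy, hgy⟩ := hex k hkm
  exact hk y hy hgy

end Mex

section Gfun

variable {V : Type*} {Γ : V → Finset V}

lemma Gfun_zero_eq_coe_iff {x : V} {m : ℕ} : Gfun Γ 0 x = (m : ℕ∞) ↔ Γ x = ∅ ∧ m = 0 := by
  by_cases hx : Γ x = ∅ <;> simp [Gfun, hx, eq_comm]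

lemma Gfun_succ_eq_coe_iff_mexF {n : ℕ} {x : V} {m : ℕ} :
    Gfun Γ (n + 1) x = (m : ℕ∞) ↔ mexF (Γ x) (Gfun Γ n) = m ∧
      ∀ y ∈ Γ x, Gfun Γ n y ≤ (m : ℕ∞) ∨ ∃ z ∈ Γ y, Gfun Γ n z = (m : ℕ∞) := by
  simp only [Gfun]
  split_ifs with hc
  · exact ⟨fun h => ⟨by exact_mod_cast h, by exact_mod_cast h ▸ hc⟩, fun h => by rw [h.1]⟩
  · refine ⟨fun h => absurd h.symm (ENat.natCast_ne_top m), fun ⟨hm, hc'⟩ => ?_⟩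
    exact absurd (hm ▸ hc') hc

/-- Otherwise the condition defining `𝒢ₙ₊₁(x)` gives `y` an option of stage-`n` value `m`, which
is the mex defining `𝒢ₙ₊₁(y)`. -/
lemma Gfun_ne_top_of_mem_of_Gfun_succ_eq {n : ℕ} {x y : V} {m : ℕ}
    (hx : Gfun Γ (n + 1) x = (m : ℕ∞)) (hy : y ∈ Γ x) (hym : Gfun Γ (n + 1) y = (m : ℕ∞)) :
    Gfun Γ n y ≠ ⊤ := by
  rcases (Gfun_succ_eq_coe_iff_mexF.mp hx).2 y hy with hle | ⟨z, hz, hzm⟩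
  · exact ne_top_of_le_ne_top (ENat.natCast_ne_top m) hle
  · exact absurd hzm ((Gfun_succ_eq_coe_iff_mexF.mp hym).1 ▸ mexF_ne (Γ y) (Gfun Γ n) z hz)

lemma Gfun_succ_of_ne_top (n : ℕ) {x : V} (hx : Gfun Γ n x ≠ ⊤) :
    Gfun Γ (n + 1) x = Gfun Γ n x := by
  induction n generalizing x with
  | zero =>
    obtain ⟨m, hm⟩ := ENat.ne_top_iff_exists.mp hx
    obtain ⟨hΓ, rfl⟩ := Gfun_zero_eq_coe_iff.mp hm.symm
    rw [← hm, Gfun_succ_eq_coe_iff_mexF, mexF_eq_iff]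
    simp [hΓ]
  | succ n ih =>
    obtain ⟨m, hm⟩ := ENat.ne_top_iff_exists.mp hx
    obtain ⟨hmex, hcond⟩ := Gfun_succ_eq_coe_iff_mexF.mp hm.symm
    have ih_eq {y : V} {k : ℕ} (hy : Gfun Γ n y = (k : ℕ∞)) : Gfun Γ (n + 1) y = (k : ℕ∞) := by
      rw [ih (by simp [hy]), hy]
    rw [← hm, Gfun_succ_eq_coe_iff_mexF, mexF_eq_iff]
    refine ⟨⟨fun y hy hym => ?_, fun i hi => ?_⟩, fun y hy => ?_⟩
    · have hfin := Gfun_ne_top_of_mem_of_Gfun_succ_eq hm.symm hy hym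
      exact mexF_ne (Γ x) (Gfun Γ n) y hy (hmex ▸ ih hfin ▸ hym)
    · obtain ⟨y, hy, hyi⟩ := exists_eq_of_lt_mexF (Γ x) (Gfun Γ n) (hmex ▸ hi)
      exact ⟨y, hy, ih_eq hyi⟩
    · rcases hcond y hy with hle | ⟨z, hz, hzm⟩
      · obtain ⟨k, hk⟩ := ENat.ne_top_iff_exists.mp (ne_top_of_le_ne_top (ENat.natCast_ne_top m) hle)
        exact Or.inl (ih_eq hk.symm ▸ hk ▸ hle)
      · exact Or.inr ⟨z, hz, ih_eq hzm⟩

lemma Gfun_eq_of_le_of_ne_top {n k : ℕ} (hnk : n ≤ k) {x : V} (hx : Gfun Γ n x ≠ ⊤) :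
    Gfun Γ k x = Gfun Γ n x := by
  induction k, hnk using Nat.le_induction with
  | base => rfl
  | succ k _ ih => rw [Gfun_succ_of_ne_top k (ih ▸ hx), ih]

lemma Gfun_ne_of_mem_of_Gfun_eq {n : ℕ} {y z : V} {m : ℕ} (hy : Gfun Γ n y = (m : ℕ∞))
    (hz : z ∈ Γ y) : Gfun Γ n z ≠ (m : ℕ∞) := by
  intro hzm
  cases n with
  | zero => simp [(Gfun_zero_eq_coe_iff.mp hy).1] at hz
  | succ n =>
    have hfin := Gfun_ne_top_of_mem_of_Gfun_succ_eq hy hz hzm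
    exact mexF_ne (Γ y) (Gfun Γ n) z hz
      ((Gfun_succ_eq_coe_iff_mexF.mp hy).1 ▸ Gfun_succ_of_ne_top n hfin ▸ hzm)

lemma Gfun_succ_eq_coe_iff {n : ℕ} {x : V} {m : ℕ} :
    Gfun Γ (n + 1) x = (m : ℕ∞) ↔ (∀ i < m, ∃ y ∈ Γ x, Gfun Γ n y = (i : ℕ∞)) ∧
      ∀ y ∈ Γ x, (∃ k < m, Gfun Γ n y = (k : ℕ∞)) ∨ ∃ z ∈ Γ y, Gfun Γ n z = (m : ℕ∞) := by
  rw [Gfun_succ_eq_coe_iff_mexF, mexF_eq_iff]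
  constructor
  · rintro ⟨⟨hne, hex⟩, hcond⟩
    refine ⟨hex, fun y hy => (hcond y hy).imp_left fun hle => ?_⟩
    obtain ⟨k, hk⟩ := ENat.ne_top_iff_exists.mp (ne_top_of_le_ne_top (ENat.natCast_ne_top m) hle)
    refine ⟨k, lt_of_le_of_ne ?_ ?_, hk.symm⟩
    · exact_mod_cast hk ▸ hle
    · rintro rfl
      exact hne y hy hk.symm
  · rintro ⟨hex, hcond⟩
    refine ⟨⟨fun y hy hym => ?_, hex⟩, fun y hy => (hcond y hy).imp_left ?_⟩
    · rcases hcond y hy with ⟨k, hkm, hk⟩ | ⟨z, hz, hzm⟩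
      · exact hkm.ne (by exact_mod_cast hk.symm.trans hym)
      · exact Gfun_ne_of_mem_of_Gfun_eq hym hz hzm
    · rintro ⟨k, hkm, hk⟩
      exact hk ▸ by exact_mod_cast hkm.le

end Gfun

section Rank

variable {V : Type*} (Γ : V → Finset V) (x : V)

lemma rank_le_coe_iff (n : ℕ) : rank Γ x ≤ (n : ℕ∞) ↔ Gfun Γ n x ≠ ⊤ := by
  rw [← ENat.lt_natCast_add_one_iff, rank, sInf_lt_iff]
  simp only [Set.mem_image, Set.mem_ofPred_eq, exists_exists_and_eq_and]
  constructor
  · rintro ⟨k, hk, hkn⟩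
    have hkn : k ≤ n := by exact_mod_cast ENat.lt_natCast_add_one_iff.mp hkn
    exact Gfun_eq_of_le_of_ne_top hkn hk ▸ hk
  · exact fun hn => ⟨n, hn, ENat.lt_natCast_add_one_iff.mpr le_rfl⟩

lemma rank_le_coe_and_hasGVal_iff (n m : ℕ) :
    (rank Γ x ≤ (n : ℕ∞) ∧ HasGVal Γ x m) ↔ Gfun Γ n x = (m : ℕ∞) := by
  rw [rank_le_coe_iff]
  constructor
  · rintro ⟨hfin, n₀, hval⟩
    rw [← Gfun_eq_of_le_of_ne_top (le_max_left n n₀) hfin, hval _ (le_max_right _ _)]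
  · intro hx
    have hfin : Gfun Γ n x ≠ ⊤ := by simp [hx]
    exact ⟨hfin, n, fun k hk => (Gfun_eq_of_le_of_ne_top hk hfin).trans hx⟩

lemma rank_lt_coe_succ_and_hasGVal_iff (n m : ℕ) :
    (rank Γ x < ((n + 1 : ℕ) : ℕ∞) ∧ HasGVal Γ x m) ↔ Gfun Γ n x = (m : ℕ∞) := by
  rw [Nat.cast_succ, ENat.lt_natCast_add_one_iff, rank_le_coe_and_hasGVal_iff]

end Rank

/-- `rank(x) ≤ n` and `𝒢(x) = m` iff (i) for each `i < m` there is
`yᵢ ∈ Γ(x)` with `rank(yᵢ) < n` and `𝒢(yᵢ) = i`, and (ii) every `y ∈ Γ(x)`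
either has `rank(y) < n` and `𝒢(y) < m`, or has some `z ∈ Γ(y)` with
`rank(z) < n` and `𝒢(z) = m`. -/
theorem stmt8 {V : Type*} (Γ : V → Finset V) (x : V) (n m : ℕ) :
    (rank Γ x ≤ (n : ℕ∞) ∧ HasGVal Γ x m) ↔
      ((∀ i < m, ∃ y ∈ Γ x, rank Γ y < (n : ℕ∞) ∧ HasGVal Γ y i) ∧
        (∀ y ∈ Γ x,
          (rank Γ y < (n : ℕ∞) ∧ ∃ m' < m, HasGVal Γ y m') ∨
          (∃ z ∈ Γ y, rank Γ z < (n : ℕ∞) ∧ HasGVal Γ z m))) := by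
  rw [rank_le_coe_and_hasGVal_iff]
  cases n with
  | zero =>
    simp only [Gfun_zero_eq_coe_iff, Nat.cast_zero, not_lt_zero, false_and, and_false,
      exists_false, or_false, Finset.eq_empty_iff_forall_notMem]
    constructor
    · rintro ⟨hΓ, rfl⟩
      exact ⟨fun i hi => absurd hi (Nat.not_lt_zero i), fun y hy => hΓ y hy⟩
    · rintro ⟨hex, hΓ⟩
      exact ⟨hΓ, Nat.eq_zero_of_not_pos fun hm => hex 0 hm⟩
  | succ n =>
    rw [Gfun_succ_eq_coe_iff]
    simp only [← rank_lt_coe_succ_and_hasGVal_iff Γ, and_left_comm (b := rank Γ _ < _),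
      exists_and_left]
end
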